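/- Let V be a finite-dimensional rational vector space, M a subspace, P ⊆ V a polyhedral cone, and suppose F is a face of P with relint(F) ∩ M ≠ ∅ and ⟨F⟩ + M = V (F is M-stable). Suppose y ∈ M* satisfies ⟨F ∩ M, y⟩ = 0 and ⟨P ∩ M, y⟩ ≥ 0, and let ỹ ∈ V* be any extension of y with ⟨F, ỹ⟩ = 0. Then ⟨P, ỹ⟩ ≥ 0, i.e., ỹ lies in the normal cone N_F P (assuming 0 ∈ relint F). -/

import Mathlib

/-!
Since `0 ∈ relint F`, the face `F` is closed under negation, hence a linear subspace contained
in `P`, so `⟨F⟩ = F`. Writing `p ∈ P` as `f + m` with `f ∈ F`, `m ∈ M` gives `m = p - f ∈ P ∩ M`,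
and `ỹ p = ỹ f + y m = y m ≥ 0`.
-/

/-- A polyhedral cone: intersection of finitely many closed half-spaces through the origin. -/
def IsPolyhedralCone {W : Type*} [AddCommGroup W] [Module ℚ W] (P : Set W) : Prop :=
  ∃ s : Finset (Module.Dual ℚ W), P = {x | ∀ l ∈ s, 0 ≤ l x}

/-- The normal cone of a face `F` of `P`: functionals attaining their minimum over `P` on `F`. -/
def normalCone {W : Type*} [AddCommGroup W] [Module ℚ W] (P F : Set W) :
    Set (Module.Dual ℚ W) :=
  {y | ∀ x ∈ F, ∀ p ∈ P, y x ≤ y p}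

/-- A face of a cone `P`: a subset of the form `face_y(P)` for some linear functional `y`. -/
def IsFace {W : Type*} [AddCommGroup W] [Module ℚ W] (P F : Set W) : Prop :=
  ∃ y : Module.Dual ℚ W, F = {x ∈ P | ∀ p ∈ P, y x ≤ y p}

/-- Algebraic relative interior of a convex set. -/
def relint {W : Type*} [AddCommGroup W] [Module ℚ W] (F : Set W) : Set W :=
  {x ∈ F | ∀ y ∈ F, ∃ ε : ℚ, 0 < ε ∧ x + ε • (x - y) ∈ F}

/-- The linear span `⟨F⟩` of differences of elements of `F`. -/
def spanDiff {W : Type*} [AddCommGroup W] [Module ℚ W] (F : Set W) : Submodule ℚ W :=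
  Submodule.span ℚ {v | ∃ x ∈ F, ∃ y ∈ F, v = x - y}

section

variable {W : Type*} [AddCommGroup W] [Module ℚ W]

theorem IsPolyhedralCone.exists_pointedCone {P : Set W} (hP : IsPolyhedralCone P) :
    ∃ C : PointedCone ℚ W, (C : Set W) = P := by
  obtain ⟨s, rfl⟩ := hP
  exact ⟨PointedCone.dual LinearMap.id (s : Set (Module.Dual ℚ W)), rfl⟩

theorem IsFace.subset {P F : Set W} (hF : IsFace P F) : F ⊆ P := by
  obtain ⟨y, rfl⟩ := hF
  exact fun x hx => hx.1

-- Since `0 ∈ F`, the face's functional is nonnegative on `C`, so `F = C ∩ ker y`.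
theorem IsFace.exists_pointedCone_of_zero_mem {C : PointedCone ℚ W} {F : Set W}
    (hF : IsFace (C : Set W) F) (h0 : (0 : W) ∈ F) :
    ∃ D : PointedCone ℚ W, (D : Set W) = F := by
  obtain ⟨y, rfl⟩ := hF
  have hy : ∀ p ∈ C, 0 ≤ y p := fun p hp => by simpa using h0.2 p hp
  refine ⟨C ⊓ PointedCone.ofSubmodule (LinearMap.ker y),
    Set.ext fun x => and_congr_right fun hx => ⟨fun h p hp => ?_, fun h => ?_⟩⟩
  · rw [show y x = 0 from h]
    exact hy p hp
  · exact le_antisymm (by simpa using h 0 C.zero_mem) (hy x hx)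

theorem PointedCone.neg_mem_of_zero_mem_relint {D : PointedCone ℚ W}
    (h0 : (0 : W) ∈ relint (D : Set W)) {x : W} (hx : x ∈ D) : -x ∈ D := by
  obtain ⟨ε, hε, hεx⟩ := h0.2 x hx
  have := D.smul_mem (inv_nonneg.mpr hε.le) hεx
  rwa [zero_add, zero_sub, smul_smul, inv_mul_cancel₀ hε.ne', one_smul] at this

theorem PointedCone.coe_lineal_of_zero_mem_relint {D : PointedCone ℚ W}
    (h0 : (0 : W) ∈ relint (D : Set W)) : (D.lineal : Set W) = D :=
  Set.ext fun _ => ⟨fun hx => hx.1, fun hx => ⟨hx, D.neg_mem_of_zero_mem_relint h0 hx⟩⟩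

theorem spanDiff_coe (L : Submodule ℚ W) : spanDiff (L : Set W) = L := by
  refine le_antisymm (Submodule.span_le.mpr ?_) fun x hx =>
    Submodule.subset_span ⟨x, hx, 0, L.zero_mem, (sub_zero x).symm⟩
  rintro _ ⟨a, ha, b, hb, rfl⟩
  exact L.sub_mem ha hb

end

theorem PointedCone.apply_nonneg_of_sup_eq_top {R W : Type*} [Ring R] [PartialOrder R]
    [IsOrderedRing R] [AddCommGroup W] [Module R W] {C : PointedCone R W}
    {L M : Submodule R W} (hLM : L ⊔ M = ⊤) (hLC : ∀ x ∈ L, x ∈ C) {φ : Module.Dual R W}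
    (hL : ∀ x ∈ L, φ x = 0) (hM : ∀ m ∈ M, m ∈ C → 0 ≤ φ m) : ∀ p ∈ C, 0 ≤ φ p := by
  intro p hp
  obtain ⟨l, hl, m, hm, rfl⟩ := Submodule.mem_sup.mp (hLM ▸ Submodule.mem_top : p ∈ L ⊔ M)
  have hmC : m ∈ C := by simpa using C.add_mem hp (hLC _ (L.neg_mem hl))
  rw [map_add, hL l hl, zero_add]
  exact hM m hm hmC

theorem extension_mem_normalCone_general
    (V : Type*) [AddCommGroup V] [Module ℚ V]
    (M : Submodule ℚ V) (P F : Set V)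
    (hP : IsPolyhedralCone P) (hF : IsFace P F) (h0 : (0 : V) ∈ relint F)
    (hspan : spanDiff F ⊔ M = ⊤)
    (y : Module.Dual ℚ M)
    (hy1 : ∀ x : M, (x : V) ∈ P → 0 ≤ y x)
    (ytilde : Module.Dual ℚ V)
    (hext : ∀ m : M, ytilde (m : V) = y m)
    (hF0 : ∀ x ∈ F, ytilde x = 0) :
    (∀ p ∈ P, 0 ≤ ytilde p) ∧ ytilde ∈ normalCone P F := by
  obtain ⟨C, rfl⟩ := hP.exists_pointedCone
  obtain ⟨D, rfl⟩ := hF.exists_pointedCone_of_zero_mem h0.1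
  have hL : (D.lineal : Set V) = D := D.coe_lineal_of_zero_mem_relint h0
  rw [← hL, spanDiff_coe] at hspan
  have hnonneg : ∀ p ∈ C, 0 ≤ ytilde p :=
    C.apply_nonneg_of_sup_eq_top hspan (fun x hx => hF.subset (D.lineal_le hx))
      (fun x hx => hF0 x (hL ▸ hx)) (fun m hm hmC => hext ⟨m, hm⟩ ▸ hy1 ⟨m, hm⟩ hmC)
  exact ⟨hnonneg, fun x hx p hp => by rw [hF0 x hx]; exact hnonneg p hp⟩

/-- Surjectivity step: for an `M`-stable face `F` of a polyhedral cone `P` with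
`0 ∈ relint F`, if `y ∈ M*` vanishes on `F ∩ M` and is nonnegative on `P ∩ M`, then
any extension `ỹ ∈ V*` of `y` vanishing on `F` is nonnegative on `P`, i.e., lies in
the normal cone `N_F P`. -/
theorem extension_mem_normalCone
    (V : Type*) [AddCommGroup V] [Module ℚ V] [FiniteDimensional ℚ V]
    (M : Submodule ℚ V) (P F : Set V)
    (hP : IsPolyhedralCone P) (hF : IsFace P F) (h0 : (0 : V) ∈ relint F)
    (hrel : (relint F ∩ (M : Set V)).Nonempty)
    (hspan : spanDiff F ⊔ M = ⊤)
    (y : Module.Dual ℚ M)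
    (hy0 : ∀ x : M, (x : V) ∈ F → y x = 0)
    (hy1 : ∀ x : M, (x : V) ∈ P → 0 ≤ y x)
    (ytilde : Module.Dual ℚ V)
    (hext : ∀ m : M, ytilde (m : V) = y m)
    (hF0 : ∀ x ∈ F, ytilde x = 0) :
    (∀ p ∈ P, 0 ≤ ytilde p) ∧ ytilde ∈ normalCone P F :=
  extension_mem_normalCone_general V M P F hP hF h0 hspan y hy1 ytilde hext hF0
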